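/- arXiv:1806.02810 — 2 statements merged into one kernel-verified Lean document; each statement's English description precedes it below -/
import Mathlib

section
/- Let f be a continuous map on a metric space X. If x is a topologically transitive point of f and f has a dense set of periodic points at x, and there exists a periodic point q with d(x, O(q)) ≥ δ/2 for some δ > 0, then x is a sensitive point of f with sensitivity constant δ/8. -/
/-- The set of periodic points of `f`. -/
def PerSet {X : Type*} (f : X → X) : Set X :=
  {x | ∃ m : ℕ, 1 ≤ m ∧ f^[m] x = x}

/-!
Shrink the neighbourhood `U` of `x` to radius `ε = δ/8` and pick a periodic point `p` there, of
period `m`. By transitivity some `z ∈ U` has an iterate `f^[n] z` that `ε`-shadows the orbit of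
`q` for `m` steps. At a time `N = n + k` with `k < m` and `m ∣ N` the point `p` is back near `x`
while `f^[N] z` is near `f^[k] q`, at distance `≥ 4ε` from `x`; so `f^[N] p` and `f^[N] z` are
more than `2ε` apart, and `f^[N] x` is more than `ε` away from one of them.
-/

open Function Metric

theorem Nat.exists_lt_dvd_add {m : ℕ} (hm : 0 < m) (n : ℕ) : ∃ k < m, m ∣ n + k := by
  refine ⟨(m - n % m) % m, Nat.mod_lt _ hm, ?_⟩
  rw [Nat.dvd_iff_mod_eq_zero, Nat.add_mod, Nat.mod_mod]
  have hlt := Nat.mod_lt n hm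
  rcases Nat.eq_zero_or_pos (n % m) with h | h
  · simp [h]
  · rw [Nat.mod_eq_of_lt (show m - n % m < m by omega), show n % m + (m - n % m) = m by omega,
      Nat.mod_self]

theorem lt_dist_or_lt_dist_of_two_mul_lt_dist {X : Type*} [PseudoMetricSpace X] {a b : X}
    {ε : ℝ} (h : 2 * ε < dist a b) (c : X) : ε < dist c a ∨ ε < dist c b := by
  by_contra! hc
  linarith [dist_triangle_left a b c]

section Shadowing

variable {X : Type*} [PseudoMetricSpace X]

def shadowingSet (f : X → X) (q : X) (m : ℕ) (ε : ℝ) : Set X :=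
  {y | ∀ i < m, dist (f^[i] y) (f^[i] q) < ε}

theorem isOpen_shadowingSet {f : X → X} (hf : Continuous f) (q : X) (m : ℕ) (ε : ℝ) :
    IsOpen (shadowingSet f q m ε) := by
  have : shadowingSet f q m ε = ⋂ i ∈ Finset.range m, {y | dist (f^[i] y) (f^[i] q) < ε} := by
    ext; simp [shadowingSet]
  rw [this]
  exact isOpen_biInter_finset fun i _ =>
    isOpen_lt ((hf.iterate i).dist continuous_const) continuous_const

theorem mem_shadowingSet_self (f : X → X) (q : X) (m : ℕ) {ε : ℝ} (hε : 0 < ε) :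
    q ∈ shadowingSet f q m ε :=
  fun i _ => by simpa using hε

theorem exists_two_mul_lt_dist_iterate {f : X → X} {x p q z : X} {m n : ℕ} {ε : ℝ}
    (hm : 0 < m) (hp : IsPeriodicPt f m p) (hpx : dist p x < ε) (hn : 1 ≤ n)
    (hz : f^[n] z ∈ shadowingSet f q m ε) (hfar : ∀ i, 4 * ε ≤ dist x (f^[i] q)) :
    ∃ N, 1 ≤ N ∧ 2 * ε < dist (f^[N] p) (f^[N] z) := by
  obtain ⟨k, hk, hdvd⟩ := Nat.exists_lt_dvd_add hm n
  have hpN : f^[n + k] p = p := (hp.trans_dvd hdvd).eq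
  have hzN : dist (f^[n + k] z) (f^[k] q) < ε := by
    rw [add_comm, iterate_add_apply]
    exact hz k hk
  refine ⟨n + k, by omega, ?_⟩
  have := dist_triangle4 x (f^[n + k] p) (f^[n + k] z) (f^[k] q)
  rw [hpN, dist_comm x p] at this
  rw [hpN]
  linarith [hfar k]

end Shadowing

theorem stmt_17_general {X : Type*} [MetricSpace X] (f : X → X) (hf : Continuous f) (x : X)
    (htrans : ∀ U : Set X, IsOpen U → x ∈ U → ∀ V : Set X, IsOpen V → V.Nonempty →
      ∃ n : ℕ, 1 ≤ n ∧ (f^[n] '' U ∩ V).Nonempty)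
    (hdense : ∀ U : Set X, IsOpen U → x ∈ U → ∃ p ∈ U, p ≠ x ∧ p ∈ PerSet f)
    (δ : ℝ) (hδ : 0 < δ) (q : X)
    (hfar : ∀ i : ℕ, δ / 2 ≤ dist x (f^[i] q)) :
    ∀ U : Set X, IsOpen U → x ∈ U →
      ∃ y ∈ U, ∃ n : ℕ, 1 ≤ n ∧ δ / 8 < dist (f^[n] x) (f^[n] y) := by
  intro U hU hxU
  have hε : 0 < δ / 8 := by positivity
  obtain ⟨p, ⟨hpU, hpx⟩, -, m, hm, hpm⟩ :=
    hdense (U ∩ ball x (δ / 8)) (hU.inter isOpen_ball) ⟨hxU, mem_ball_self hε⟩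
  obtain ⟨n, hn, _, ⟨z, hzU, rfl⟩, hz⟩ := htrans U hU hxU (shadowingSet f q m (δ / 8))
    (isOpen_shadowingSet hf q m _) ⟨q, mem_shadowingSet_self f q m hε⟩
  obtain ⟨N, hN, hsep⟩ := exists_two_mul_lt_dist_iterate hm hpm hpx hn hz
    fun i => by linarith [hfar i]
  rcases lt_dist_or_lt_dist_of_two_mul_lt_dist hsep (f^[N] x) with h | h
  exacts [⟨p, hpU, N, hN, h⟩, ⟨z, hzU, N, hN, h⟩]

theorem stmt_17 {X : Type*} [MetricSpace X] (f : X → X) (hf : Continuous f) (x : X)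
    (htrans : ∀ U : Set X, IsOpen U → x ∈ U → ∀ V : Set X, IsOpen V → V.Nonempty →
      ∃ n : ℕ, 1 ≤ n ∧ (f^[n] '' U ∩ V).Nonempty)
    (hdense : ∀ U : Set X, IsOpen U → x ∈ U → ∃ p ∈ U, p ≠ x ∧ p ∈ PerSet f)
    (δ : ℝ) (hδ : 0 < δ) (q : X) (hq : q ∈ PerSet f)
    (hfar : ∀ i : ℕ, δ / 2 ≤ dist x (f^[i] q)) :
    ∀ U : Set X, IsOpen U → x ∈ U →
      ∃ y ∈ U, ∃ n : ℕ, 1 ≤ n ∧ δ / 8 < dist (f^[n] x) (f^[n] y) :=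
  stmt_17_general f hf x htrans hdense δ hδ q hfar
end

section
/- Let f be a uniformly continuous surjective map on a metric space X. If f has two distinct specification points, then the Bowen entropy of f is positive; indeed h(f) ≥ (log 2)/M where M = M(ε) is a common specification constant for ε with d(x,y) > 3ε. -/
open Filter ENNReal

/-- `M` is a specification constant for `f` at `x` for tolerance `ε`. -/
def IsSpecConstAt {X : Type*} [MetricSpace X] (f : X → X) (x : X) (ε : ℝ) (M : ℕ) : Prop :=
  ∀ (k : ℕ) (xs : ℕ → X) (a b : ℕ → ℕ), 1 ≤ k → xs 1 = x →
    (∀ j, 1 ≤ j → j ≤ k → a j ≤ b j) →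
    (∀ j, 2 ≤ j → j ≤ k → b (j - 1) + M ≤ a j) →
    ∃ y : X, ∀ j, 1 ≤ j → j ≤ k → ∀ i, a j ≤ i → i ≤ b j →
      dist (f^[i] y) (f^[i] (xs j)) < ε

/-- `x` is a specification point of `f`. -/
def SpecPoint {X : Type*} [MetricSpace X] (f : X → X) (x : X) : Prop :=
  ∀ ε > 0, ∃ M : ℕ, IsSpecConstAt f x ε M

/-- `F` is an `(n, ε)`-separated set for `f`. -/
def IsSeparatedIn {X : Type*} [MetricSpace X] (f : X → X) (n : ℕ) (ε : ℝ) (F : Set X) : Prop :=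
  ∀ x ∈ F, ∀ y ∈ F, x ≠ y → ∃ i < n, ε < dist (f^[i] x) (f^[i] y)

/-- `s_n(ε, K)`: the largest cardinality of an `(n, ε)`-separated subset of `K`. -/
noncomputable def sepMaxcard {X : Type*} [MetricSpace X]
    (f : X → X) (n : ℕ) (ε : ℝ) (K : Set X) : ℕ∞ :=
  ⨆ (F : Finset X) (_ : ↑F ⊆ K ∧ IsSeparatedIn f n ε ↑F), (F.card : ℕ∞)

/-- `s(ε, K)`: the exponential growth rate of `s_n(ε, K)`. -/
noncomputable def sepEntropyAt {X : Type*} [MetricSpace X]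
    (f : X → X) (ε : ℝ) (K : Set X) : EReal :=
  atTop.limsup fun n : ℕ => ENNReal.log (sepMaxcard f n ε K : ℝ≥0∞) / (n : EReal)

/-- The Bowen entropy of `f`: `sup_K lim_{ε → 0} s(ε, K)`, where the limit as `ε → 0` of the
antitone quantity `s(ε, K)` is its supremum over `ε > 0`. -/
noncomputable def bowenEntropy {X : Type*} [MetricSpace X] (f : X → X) : EReal :=
  ⨆ (K : Set X) (_ : IsCompact K) (ε : ℝ) (_ : 0 < ε), sepEntropyAt f ε K

/-!
By specification at `x`, and surjectivity (which lets arbitrary orbit segments be pulled back),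
every binary word of length `N` is realised by a point whose orbit is `ε`-close to `x` or to `y`,
according to the letters, at times spaced `M` apart. Since `d(x, y) > 3ε`, these `2 ^ N` points
are `(T, ε)`-separated with `T ≈ N M`. A second specification step with a finer tolerance `δ`
moves all of them `δ`-close to `x`; letting `δ → 0` while `N` grows, they accumulate only at `x`
and so lie in one compact set, on which the separated sets give growth rate `log 2 / M`.
-/

open Function Set Topology

section Specification

variable {X : Type*} [MetricSpace X] {f : X → X} {x : X} {ε : ℝ} {M : ℕ}

lemma IsSpecConstAt.mono {M' : ℕ} (h : IsSpecConstAt f x ε M) (hle : M ≤ M') :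
    IsSpecConstAt f x ε M' :=
  fun k xs a b hk h1 hab hgap =>
    h k xs a b hk h1 hab fun j h2 h3 => (Nat.add_le_add_left hle _).trans (hgap j h2 h3)

lemma IsSpecConstAt.exists_near_at_times (h : IsSpecConstAt f x ε M) (hsurj : Surjective f)
    (m : ℕ) {n : ℕ} (z : Fin n → X) :
    ∃ q, ∀ t : Fin n, dist (f^[m + (t + 1) * M] q) (z t) < ε := by
  choose u hu using fun t : Fin n => hsurj.iterate (m + (t + 1) * M) (z t)
  let xs : ℕ → X := fun j => if hj : 2 ≤ j ∧ j < n + 2 then u ⟨j - 2, by omega⟩ else x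
  let a : ℕ → ℕ := fun j => m + (j - 1) * M
  obtain ⟨q, hq⟩ := h (n + 1) xs a a (by omega) (by simp [xs]) (fun _ _ _ => le_rfl) (by
    intro j hj _
    obtain ⟨k, rfl⟩ : ∃ k, j = k + 2 := ⟨j - 2, by omega⟩
    simp only [a]
    rw [show k + 2 - 1 - 1 = k by omega, show k + 2 - 1 = k + 1 by omega, add_mul, one_mul,
      add_assoc])
  refine ⟨q, fun t => ?_⟩
  have := hq (t + 2) (by omega) (by omega) (a (t + 2)) le_rfl le_rfl
  simpa [xs, a, hu] using this

lemma IsSpecConstAt.exists_near_and_shadow (h : IsSpecConstAt f x ε M) (q : X) (L : ℕ) :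
    ∃ p, dist p x < ε ∧ ∀ i ≤ L, dist (f^[M + i] p) (f^[M + i] q) < ε := by
  obtain ⟨p, hp⟩ := h 2 (fun j => if j = 2 then q else x) (fun j => if j = 2 then M else 0)
    (fun j => if j = 2 then M + L else 0) one_le_two (by simp)
    (fun j _ _ => by split_ifs <;> omega)
    (fun j _ _ => by obtain rfl : j = 2 := (by omega); simp)
  exact ⟨p, by simpa using hp 1 le_rfl one_le_two 0 le_rfl le_rfl,
    fun i hi => by simpa using hp 2 one_le_two le_rfl (M + i) (by simp) (by simpa using hi)⟩

/-- The letter `w t` is encoded by the orbit of `P w` being `(ε + δ)`-close to `x` or `y` at time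
`M' + (t + 1) M`. -/
lemma exists_separated_words {y : X} {δ : ℝ} {M' : ℕ} (hsurj : Surjective f)
    (hε : IsSpecConstAt f x ε M) (hδ : IsSpecConstAt f x δ M') (hxy : 3 * ε + 2 * δ < dist x y)
    (n : ℕ) :
    ∃ P : (Fin n → Bool) → X, (∀ w, dist (P w) x < δ) ∧
      ∀ w w', w ≠ w' → ∃ i < M' + n * M + 1, ε < dist (f^[i] (P w)) (f^[i] (P w')) := by
  let c : Bool → X := fun b => if b then y else x
  have hc : ∀ b b', b ≠ b' → dist (c b) (c b') = dist x y := by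
    intro b b' hne; cases b <;> cases b' <;> simp_all [c, dist_comm]
  have hword : ∀ w : Fin n → Bool, ∃ p, dist p x < δ ∧
      ∀ t : Fin n, dist (f^[M' + (t + 1) * M] p) (c (w t)) < ε + δ := by
    intro w
    obtain ⟨q, hq⟩ := hε.exists_near_at_times hsurj M' (c ∘ w)
    obtain ⟨p, hpx, hpq⟩ := hδ.exists_near_and_shadow q (n * M)
    refine ⟨p, hpx, fun t => ?_⟩
    have hshadow := hpq ((t + 1) * M) (Nat.mul_le_mul_right M t.isLt)
    calc _ ≤ dist (f^[M' + (t + 1) * M] p) (f^[M' + (t + 1) * M] q)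
          + dist (f^[M' + (t + 1) * M] q) (c (w t)) := dist_triangle _ _ _
      _ < δ + ε := add_lt_add hshadow (hq t)
      _ = ε + δ := add_comm _ _
  choose P hPx hPw using hword
  refine ⟨P, hPx, fun w w' hne => ?_⟩
  obtain ⟨t, ht⟩ := Function.ne_iff.mp hne
  refine ⟨M' + (t + 1) * M, Nat.lt_succ_of_le (by gcongr; exact t.isLt), ?_⟩
  have := dist_triangle4 (c (w t)) (f^[M' + (t + 1) * M] (P w)) (f^[M' + (t + 1) * M] (P w'))
    (c (w' t))
  rw [hc _ _ ht, dist_comm (c (w t))] at this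
  linarith [hPw w t, hPw w' t]

end Specification

section Entropy

variable {X : Type*} [MetricSpace X] {f : X → X} {ε : ℝ} {K : Set X}

lemma card_le_sepMaxcard {ι : Type*} [Fintype ι] {n : ℕ} (hε : 0 ≤ ε) {P : ι → X}
    (hK : range P ⊆ K) (hsep : ∀ i j, i ≠ j → ∃ t < n, ε < dist (f^[t] (P i)) (f^[t] (P j))) :
    (Fintype.card ι : ℕ∞) ≤ sepMaxcard f n ε K := by
  classical
  have hinj : Injective P := fun i j hij => by
    by_contra hne
    obtain ⟨t, -, ht⟩ := hsep i j hne
    rw [hij, dist_self] at ht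
    linarith
  refine le_iSup₂_of_le (Finset.univ.image P) ⟨?_, ?_⟩ ?_
  · simpa using hK
  · simp only [Finset.coe_image, Finset.coe_univ, image_univ]
    rintro _ ⟨i, rfl⟩ _ ⟨j, rfl⟩ hne
    exact hsep i j (ne_of_apply_ne P hne)
  · rw [Finset.card_image_of_injective _ hinj, Finset.card_univ]

lemma le_sepEntropyAt_of_two_pow_le {N T : ℕ → ℕ} {r : ℝ} (hT : Tendsto T atTop atTop)
    (hcard : ∀ ℓ, 2 ^ N ℓ ≤ sepMaxcard f (T ℓ) ε K)
    (hr : Tendsto (fun ℓ => (N ℓ : ℝ) / T ℓ) atTop (𝓝 r)) :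
    ((Real.log 2 * r : ℝ) : EReal) ≤ sepEntropyAt f ε K := by
  have hlim : Tendsto (fun ℓ => ((Real.log 2 * (N ℓ / T ℓ) : ℝ) : EReal)) atTop
      (𝓝 (Real.log 2 * r : ℝ)) :=
    (continuous_coe_real_ereal.tendsto _).comp (hr.const_mul _)
  have hle : ∀ ℓ, 0 < T ℓ → ((Real.log 2 * (N ℓ / T ℓ) : ℝ) : EReal) ≤
      ENNReal.log (sepMaxcard f (T ℓ) ε K : ℝ≥0∞) / (T ℓ : EReal) := by
    intro ℓ hTℓ
    have hlog :
        ((N ℓ * Real.log 2 : ℝ) : EReal) ≤ ENNReal.log (sepMaxcard f (T ℓ) ε K : ℝ≥0∞) := by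
      calc ((N ℓ * Real.log 2 : ℝ) : EReal) = ENNReal.log (2 ^ N ℓ) := by
            rw [ENNReal.log_pow, ENNReal.log_pos_real (by norm_num) (by norm_num)]
            norm_num
        _ ≤ _ := ENNReal.log_monotone (by exact_mod_cast ENat.toENNReal_le.mpr (hcard ℓ))
    rw [← mul_div_assoc, mul_comm (Real.log 2), EReal.coe_div, EReal.coe_coe_eq_natCast]
    exact EReal.div_le_div_right_of_nonneg (by positivity) hlog
  calc ((Real.log 2 * r : ℝ) : EReal)
      = limsup (fun ℓ => ((Real.log 2 * (N ℓ / T ℓ) : ℝ) : EReal)) atTop := hlim.limsup_eq.symm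
    _ ≤ limsup (fun ℓ => ENNReal.log (sepMaxcard f (T ℓ) ε K : ℝ≥0∞) / (T ℓ : EReal)) atTop :=
      limsup_le_limsup ((hT.eventually_gt_atTop 0).mono hle)
    _ ≤ sepEntropyAt f ε K := by
      unfold sepEntropyAt
      exact hT.limsup_comp_le_limsup
        (u := fun n : ℕ => ENNReal.log (sepMaxcard f n ε K : ℝ≥0∞) / (n : EReal))

lemma sepEntropyAt_le_bowenEntropy (hK : IsCompact K) (hε : 0 < ε) :
    sepEntropyAt f ε K ≤ bowenEntropy f :=
  le_iSup₂_of_le K hK (le_iSup₂_of_le ε hε le_rfl)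

end Entropy

lemma isCompact_insert_range_sigma_of_tendsto {X : Type*} [MetricSpace X] {ι : ℕ → Type*}
    [∀ ℓ, Finite (ι ℓ)] {P : ∀ ℓ, ι ℓ → X} {x : X} {δ : ℕ → ℝ} (hδ : Tendsto δ atTop (𝓝 0))
    (hP : ∀ ℓ i, dist (P ℓ i) x < δ ℓ) :
    IsCompact (insert x (range fun i : Σ ℓ, ι ℓ => P i.1 i.2)) := by
  apply Tendsto.isCompact_insert_range_of_cofinite
  have hfst : Tendsto (Sigma.fst : (Σ ℓ, ι ℓ) → ℕ) cofinite atTop := by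
    rw [← Nat.cofinite_eq_atTop]
    refine Tendsto.cofinite_of_finite_preimage_singleton fun ℓ => ?_
    refine ((finite_range (Sigma.mk ℓ)).subset ?_).to_subtype
    rintro ⟨ℓ, i⟩ rfl
    exact ⟨i, rfl⟩
  rw [tendsto_iff_dist_tendsto_zero]
  exact squeeze_zero (fun _ => dist_nonneg) (fun i => (hP i.1 i.2).le) (hδ.comp hfst)

theorem log_two_div_le_bowenEntropy {X : Type*} [MetricSpace X] {f : X → X} {x y : X} {ε : ℝ}
    {M : ℕ} (hsurj : Surjective f) (hx : SpecPoint f x) (hε : 0 < ε) (hxy : 3 * ε < dist x y)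
    (hM : 0 < M) (hxM : IsSpecConstAt f x ε M) :
    ((Real.log 2 / M : ℝ) : EReal) ≤ bowenEntropy f := by
  set η := (dist x y - 3 * ε) / 4 with hη_def
  have hη : 0 < η := by linarith
  set δ : ℕ → ℝ := fun ℓ => η / ((ℓ + 1 : ℕ) : ℝ)
  have hδ : Tendsto δ atTop (𝓝 0) :=
    (tendsto_const_div_atTop_nhds_zero_nat η).comp (tendsto_add_atTop_nat 1)
  have hδpos : ∀ ℓ, 0 < δ ℓ := fun ℓ => by positivity
  have hδsep : ∀ ℓ, 3 * ε + 2 * δ ℓ < dist x y := fun ℓ => by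
    have : δ ℓ ≤ η := div_le_self hη.le (by exact_mod_cast Nat.le_add_left 1 ℓ)
    linarith
  choose M' hM' using fun ℓ => hx (δ ℓ) (hδpos ℓ)
  -- word lengths chosen so that the delay `M' ℓ` is negligible against `N ℓ * M`
  let N : ℕ → ℕ := fun ℓ => (ℓ + 1) * (M' ℓ + 1)
  let T : ℕ → ℕ := fun ℓ => M' ℓ + N ℓ * M + 1
  choose P hPx hPsep using fun ℓ => exists_separated_words hsurj hxM (hM' ℓ) (hδsep ℓ) (N ℓ)
  set K := insert x (range fun i : Σ ℓ, Fin (N ℓ) → Bool => P i.1 i.2)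
  have hK : IsCompact K := isCompact_insert_range_sigma_of_tendsto hδ hPx
  have hcard : ∀ ℓ, 2 ^ N ℓ ≤ sepMaxcard f (T ℓ) ε K := fun ℓ => by
    simpa using card_le_sepMaxcard hε.le
      (by rintro _ ⟨w, rfl⟩; exact mem_insert_of_mem _ ⟨⟨ℓ, w⟩, rfl⟩) (hPsep ℓ)
  have hT : Tendsto T atTop atTop :=
    tendsto_atTop_mono (fun ℓ => by
      have : ℓ + 1 ≤ N ℓ := Nat.le_mul_of_pos_right _ (Nat.succ_pos _)
      have := Nat.le_mul_of_pos_right (N ℓ) hM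
      simp only [T, id]
      omega) tendsto_id
  have hratio : Tendsto (fun ℓ => (N ℓ : ℝ) / T ℓ) atTop (𝓝 (1 / M)) := by
    have hNT : ∀ ℓ, (N ℓ : ℝ) / T ℓ = (M + 1 / ((ℓ + 1 : ℕ) : ℝ))⁻¹ := by
      intro ℓ
      simp only [N, T]
      field_simp
      push_cast
      ring
    simp_rw [hNT, one_div (M : ℝ)]
    refine Tendsto.inv₀ ?_ (by positivity)
    simpa using (tendsto_one_div_atTop_nhds_zero_nat.comp (tendsto_add_atTop_nat 1)).const_add
      (M : ℝ)
  calc ((Real.log 2 / M : ℝ) : EReal) = ((Real.log 2 * (1 / M) : ℝ) : EReal) := by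
        rw [mul_one_div]
    _ ≤ sepEntropyAt f ε K := le_sepEntropyAt_of_two_pow_le hT hcard hratio
    _ ≤ bowenEntropy f := sepEntropyAt_le_bowenEntropy hK hε

theorem stmt_19_general {X : Type*} [MetricSpace X] (f : X → X)
    (hsurj : Function.Surjective f)
    (x y : X) (hxy : x ≠ y) (hx : SpecPoint f x) :
    0 < bowenEntropy f ∧
      ∀ ε > 0, 3 * ε < dist x y → ∀ M : ℕ, 0 < M →
        IsSpecConstAt f x ε M → IsSpecConstAt f y ε M →
          ((Real.log 2 / M : ℝ) : EReal) ≤ bowenEntropy f := by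
  refine ⟨?_, fun ε hε hd M hM hxM _ => log_two_div_le_bowenEntropy hsurj hx hε hd hM hxM⟩
  have hd : 0 < dist x y := dist_pos.mpr hxy
  obtain ⟨M, hM⟩ := hx (dist x y / 4) (by positivity)
  have hbound := log_two_div_le_bowenEntropy (y := y) hsurj hx (by positivity) (by linarith)
    M.succ_pos (hM.mono M.le_succ)
  exact (EReal.coe_pos.mpr (div_pos (Real.log_pos one_lt_two) (by positivity))).trans_le hbound

theorem stmt_19 {X : Type*} [MetricSpace X] (f : X → X)
    (hf : UniformContinuous f) (hsurj : Function.Surjective f)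
    (x y : X) (hxy : x ≠ y) (hx : SpecPoint f x) (hy : SpecPoint f y) :
    0 < bowenEntropy f ∧
      ∀ ε > 0, 3 * ε < dist x y → ∀ M : ℕ, 0 < M →
        IsSpecConstAt f x ε M → IsSpecConstAt f y ε M →
          ((Real.log 2 / M : ℝ) : EReal) ≤ bowenEntropy f :=
  stmt_19_general f hsurj x y hxy hx
end
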